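/- Let k ≥ 2 and r ∈ (0,1). Then r^k · M(r) ≤ 1 if and only if s_k(r) := 4(1−r) − r^{k−1}(1 − 2r + 5r²) ≥ 0; consequently, for every f ∈ 𝓑_k with expansion f(z) = ∑_{n=k}^∞ a_n z^n, the bound r^k( |a_k| + (r/(1−r))(1−|a_k|²) ) ≤ r^k M(r) ≤ 1 holds for all r ∈ [0, R_k]. -/

import Mathlib

/-!
The coefficient bound `|a_k| ≤ 1` is Cauchy's estimate on circles of radius `ρ < 1`, letting
`ρ → 1`. The rest is elementary: for `r > 1/3` and `t = r / (1 - r)` one has `M(r) = t + 1/(4t)`,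
which is the maximum of `x + t (1 - x²)` over `x ∈ ℝ`; and `s_k` is decreasing on `[0, ∞)`
because `r ↦ r (1 - 2r + 5r²)` is increasing there, so `s_k ≥ s_k(R_k) = 0` on `[0, R_k]`.
-/

open Filter Metric Topology
open scoped NNReal

namespace Bohr

open FormalMultilinearSeries

variable {f : ℂ → ℂ} {a : ℕ → ℂ} {R : ℝ≥0}

theorem hasFPowerSeriesOnBall_ofScalars (hR : 0 < R)
    (hsum : ∀ z : ℂ, ‖z‖ < R → HasSum (fun n => a n * z ^ n) (f z)) :
    HasFPowerSeriesOnBall f (ofScalars ℂ a) 0 R := by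
  refine ⟨ENNReal.le_of_forall_nnreal_lt fun ρ hρ => ?_, by exact_mod_cast hR,
    fun {z} hz => ?_⟩
  · have hρR : ‖((ρ : ℝ) : ℂ)‖ < R := by simpa using hρ
    refine (ofScalars ℂ a).le_radius_of_tendsto (l := 0) ?_
    simpa [ofScalars_norm] using (hsum _ hρR).summable.tendsto_atTop_zero.norm
  · have hzR : ‖z‖ < R := by simpa using hz
    simpa [ofScalars_apply_eq, mul_comm] using hsum z hzR

theorem coeff_eq_iteratedDeriv_div_factorial (hf : HasFPowerSeriesAt f (ofScalars ℂ a) 0)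
    (n : ℕ) :
    a n = iteratedDeriv n f 0 / n.factorial := by
  have h := hf.eq_formalMultilinearSeries hf.analyticAt.hasFPowerSeriesAt
  exact congrFun (ofScalars_series_injective ℂ ℂ h) n

theorem norm_coeff_mul_pow_le {C : ℝ} (hR : 0 < R)
    (hsum : ∀ z : ℂ, ‖z‖ < R → HasSum (fun n => a n * z ^ n) (f z))
    (hbd : ∀ z : ℂ, ‖z‖ < R → ‖f z‖ ≤ C) (n : ℕ) :
    ‖a n‖ * (R : ℝ) ^ n ≤ C := by
  have hf := hasFPowerSeriesOnBall_ofScalars hR hsum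
  have hdiff : DifferentiableOn ℂ f (ball 0 R) := by
    simpa using hf.differentiableOn
  have hρ : ∀ ρ ∈ Set.Ioo (0 : ℝ) R, ‖a n‖ * ρ ^ n ≤ C := by
    rintro ρ ⟨hρ0, hρR⟩
    have hcauchy := Complex.norm_iteratedDeriv_le_of_forall_mem_sphere_norm_le n hρ0
      (hdiff.diffContOnCl_ball (closedBall_subset_ball hρR))
      fun z hz => hbd z (by rw [mem_sphere_zero_iff_norm.mp hz]; exact hρR)
    rw [coeff_eq_iteratedDeriv_div_factorial hf.hasFPowerSeriesAt n, norm_div,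
      Complex.norm_natCast, div_mul_eq_mul_div, div_le_iff₀ (by positivity)]
    rw [le_div_iff₀ (by positivity)] at hcauchy
    linarith
  have hlim : Tendsto (fun ρ : ℝ => ‖a n‖ * ρ ^ n) (𝓝[<] R) (𝓝 (‖a n‖ * R ^ n)) :=
    ((continuous_pow n).const_mul _ |>.tendsto _).mono_left nhdsWithin_le_nhds
  exact le_of_tendsto hlim (eventually_of_mem (Ioo_mem_nhdsLT (by exact_mod_cast hR)) hρ)

noncomputable def bohrM (r : ℝ) : ℝ :=
  if r ≤ 1 / 3 then 1 else (1 - 2 * r + 5 * r ^ 2) / (4 * r * (1 - r))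

def bohrS (k : ℕ) (r : ℝ) : ℝ :=
  4 * (1 - r) - r ^ (k - 1) * (1 - 2 * r + 5 * r ^ 2)

theorem pow_mul_bohrM_le_one_iff {k : ℕ} (hk : 1 ≤ k) {r : ℝ} (hr0 : 0 ≤ r) (hr1 : r < 1) :
    r ^ k * bohrM r ≤ 1 ↔ 0 ≤ bohrS k r := by
  obtain ⟨n, rfl⟩ : ∃ n, k = n + 1 := ⟨k - 1, by omega⟩
  have hQ : 0 ≤ 1 - 2 * r + 5 * r ^ 2 := by nlinarith [sq_nonneg (1 - 5 * r)]
  have hpow : r ^ n ≤ 1 := pow_le_one₀ hr0 hr1.le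
  unfold bohrM bohrS
  rw [Nat.add_sub_cancel]
  split_ifs with h
  · refine iff_of_true (by simpa using pow_le_one₀ hr0 hr1.le) ?_
    nlinarith [mul_le_mul_of_nonneg_right hpow hQ]
  · have hr : 0 < r := by linarith
    rw [← mul_div_assoc, div_le_one (by nlinarith),
      show 4 * r * (1 - r) = r * (4 * (1 - r)) by ring, pow_succ', mul_assoc,
      mul_le_mul_iff_of_pos_left hr, sub_nonneg]

theorem add_mul_one_sub_sq_le_bohrM {x r : ℝ} (hx : |x| ≤ 1) (hr : r < 1) :
    x + r / (1 - r) * (1 - x ^ 2) ≤ bohrM r := by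
  have hx2 : x ^ 2 ≤ 1 := sq_le_one_iff_abs_le_one x |>.mpr hx
  set t := r / (1 - r) with ht
  unfold bohrM
  split_ifs with h
  · have ht2 : t ≤ 1 / 2 := by
      rw [ht, div_le_iff₀ (by linarith)]; linarith
    nlinarith [sq_nonneg (1 - x)]
  · have htpos : 0 < t := div_pos (by linarith) (by linarith)
    have hM : (1 - 2 * r + 5 * r ^ 2) / (4 * r * (1 - r)) = t + 1 / (4 * t) := by
      rw [ht]; field_simp; ring
    have hgap : t + 1 / (4 * t) - (x + t * (1 - x ^ 2)) = (1 - 2 * t * x) ^ 2 / (4 * t) := by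
      field_simp; ring
    rw [hM, ← sub_nonneg, hgap]
    positivity

theorem bohrS_antitoneOn {k : ℕ} (hk : 2 ≤ k) : AntitoneOn (bohrS k) (Set.Ici 0) := by
  obtain ⟨n, rfl⟩ : ∃ n, k = n + 2 := ⟨k - 2, by omega⟩
  intro x hx y _ hxy
  have hcubic : x * (1 - 2 * x + 5 * x ^ 2) ≤ y * (1 - 2 * y + 5 * y ^ 2) := by
    nlinarith [sq_nonneg (x + y - 2 / 5), sq_nonneg (x - y), mul_nonneg hx (sub_nonneg.2 hxy)]
  have hmono : x ^ (n + 1) * (1 - 2 * x + 5 * x ^ 2) ≤ y ^ (n + 1) * (1 - 2 * y + 5 * y ^ 2) := by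
    rw [pow_succ x n, pow_succ y n, mul_assoc, mul_assoc]
    exact mul_le_mul (pow_le_pow_left₀ hx hxy n) hcubic
      (mul_nonneg hx (by nlinarith [sq_nonneg (1 - 5 * x)])) (pow_nonneg (hx.trans hxy) n)
  simp only [bohrS, Nat.add_succ_sub_one]
  linarith

end Bohr

open Bohr

/-- For `k ≥ 2` and `r ∈ (0,1)`: `r^k M(r) ≤ 1 ↔ s_k(r) ≥ 0`; consequently, for
`f ∈ 𝓑_k` and `r ∈ [0, R_k]`,
`r^k(|a_k| + (r/(1−r))(1−|a_k|²)) ≤ r^k M(r) ≤ 1`. -/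
theorem bohr_stmt18 (k : ℕ) (hk : 2 ≤ k)
    (M : ℝ → ℝ)
    (hM : M = fun r : ℝ =>
      if r ≤ 1 / 3 then 1 else (1 - 2 * r + 5 * r ^ 2) / (4 * r * (1 - r))) :
    (∀ r ∈ Set.Ioo (0 : ℝ) 1,
      (r ^ k * M r ≤ 1 ↔ 0 ≤ 4 * (1 - r) - r ^ (k - 1) * (1 - 2 * r + 5 * r ^ 2))) ∧
    (∀ R ∈ Set.Ioo (0 : ℝ) 1,
      4 * (1 - R) - R ^ (k - 1) * (1 - 2 * R + 5 * R ^ 2) = 0 →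
      ∀ (f : ℂ → ℂ) (a : ℕ → ℂ),
        (∀ z : ℂ, ‖z‖ < 1 → HasSum (fun n : ℕ => a n * z ^ n) (f z)) →
        (∀ z : ℂ, ‖z‖ < 1 → ‖f z‖ ≤ 1) →
        (∀ n < k, a n = 0) →
        ∀ r ∈ Set.Icc (0 : ℝ) R,
          r ^ k * (‖a k‖ + r / (1 - r) * (1 - ‖a k‖ ^ 2)) ≤ r ^ k * M r ∧
          r ^ k * M r ≤ 1) := by
  obtain rfl : M = bohrM := hM
  refine ⟨fun r hr => pow_mul_bohrM_le_one_iff (by omega) hr.1.le hr.2, ?_⟩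
  rintro R ⟨hR0, hR1⟩ hR f a hsum hbd - r ⟨hr0, hrR⟩
  have hr1 : r < 1 := hrR.trans_lt hR1
  have hak : ‖a k‖ ≤ 1 := by
    simpa using norm_coeff_mul_pow_le (R := 1) one_pos (by simpa using hsum) (by simpa using hbd) k
  have hs : 0 ≤ bohrS k r := hR ▸ bohrS_antitoneOn hk hr0 hR0.le hrR
  exact ⟨mul_le_mul_of_nonneg_left (add_mul_one_sub_sq_le_bohrM (by rwa [abs_norm]) hr1)
      (by positivity), (pow_mul_bohrM_le_one_iff (by omega) hr0 hr1).2 hs⟩
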